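/- arXiv:2206.14590 — 3 statements merged into one kernel-verified Lean document; each statement's English description precedes it below -/
import Mathlib

section
/- Let Σ be a finite nonempty alphabet and let A_D be the TBA over Σ with locations {A, B}, a single initial and accepting location A, a single clock z, and transitions: for every α ∈ Σ, (A, B, α, {z}, true), (B, B, α, ∅, z < 1), and (B, A, α, ∅, z ≥ 1). Then L(A_D) = T_DΣ^ω, i.e., the language of A_D is exactly the set of all time divergent infinite timed words over Σ. (Theorem 1.) -/
open Filter

/-! ## Timed words -/

/-- An infinite timed word: a symbol sequence and a timestamp sequence (positions 0,1,2,…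
correspond to the paper's positions 1,2,3,…; the convention τ₀ = 0 is used in definitions). -/
abbrev InfTW (α : Type) := (ℕ → α) × (ℕ → ℝ)

/-- `ρ` is a genuine infinite timed word: timestamps are strictly increasing
non-negative reals (strictly above the conventional τ₀ = 0). -/
def IsInfTW {α : Type} (ρ : InfTW α) : Prop := 0 < ρ.2 0 ∧ StrictMono ρ.2

/-- Time divergent infinite timed words. -/
def IsDivergent {α : Type} (ρ : InfTW α) : Prop := IsInfTW ρ ∧ Tendsto ρ.2 atTop atTop

/-- A finite timed word with `len + 1` letters, at positions `0,…,len`. -/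
structure FinTW (α : Type) where
  len : ℕ
  sym : ℕ → α
  time : ℕ → ℝ

/-- `ρ` is a genuine finite timed word: `0 < τ₁ < … < τ_n`. -/
def IsFinTW {α : Type} (ρ : FinTW α) : Prop :=
  0 < ρ.time 0 ∧ ∀ i < ρ.len, ρ.time i < ρ.time (i + 1)

/-- Duration of a finite timed word. -/
def FinTW.dur {α : Type} (ρ : FinTW α) : ℝ := ρ.time ρ.len

/-- Concatenation of a finite timed word with an infinite timed word
(timestamps of the suffix are shifted by the duration). -/
def FinTW.catInf {α : Type} (ρ : FinTW α) (μ : InfTW α) : InfTW α :=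
  (fun i => if i ≤ ρ.len then ρ.sym i else μ.1 (i - ρ.len - 1),
   fun i => if i ≤ ρ.len then ρ.time i else ρ.dur + μ.2 (i - ρ.len - 1))

/-- Concatenation of two finite timed words. -/
def FinTW.catFin {α : Type} (ρ ρ' : FinTW α) : FinTW α where
  len := ρ.len + 1 + ρ'.len
  sym := fun i => if i ≤ ρ.len then ρ.sym i else ρ'.sym (i - ρ.len - 1)
  time := fun i => if i ≤ ρ.len then ρ.time i else ρ.dur + ρ'.time (i - ρ.len - 1)

/-! ## Timed Büchi automata -/

/-- Comparison operators for clock constraints. -/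
inductive Cmp where
  | lt
  | le
  | eq
  | ge
  | gt

def Cmp.sat : Cmp → ℝ → ℕ → Prop
  | .lt, x, n => x < n
  | .le, x, n => x ≤ n
  | .eq, x, n => x = n
  | .ge, x, n => (n : ℝ) ≤ x
  | .gt, x, n => (n : ℝ) < x

/-- Clock constraints: finite conjunctions of atoms `c ∼ n`. -/
inductive CC (C : Type) where
  | tt : CC C
  | atom : C → Cmp → ℕ → CC C
  | and : CC C → CC C → CC C

/-- Satisfaction of a clock constraint by a clock valuation. -/
def CC.sat {C : Type} (v : C → ℝ) : CC C → Prop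
  | .tt => True
  | .atom c op n => op.sat (v c) n
  | .and g g' => g.sat v ∧ g'.sat v

/-- Renaming of clocks in a clock constraint. -/
def CC.map {C D : Type} (f : C → D) : CC C → CC D
  | .tt => .tt
  | .atom c op n => .atom (f c) op n
  | .and g g' => .and (g.map f) (g'.map f)

/-- A transition of a TBA. -/
structure TBATrans (α Q C : Type) where
  src : Q
  dst : Q
  sym : α
  reset : Set C
  guard : CC C

/-- A timed Büchi automaton over alphabet `α` with locations `Q` and clocks `C`
(finiteness of `α`, `Q`, `C` and of the transition set is assumed where needed). -/
structure TBA (α Q C : Type) where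
  init : Set Q
  trans : Set (TBATrans α Q C)
  final : Set Q

/-- A state of a TBA: a location together with a clock valuation. -/
abbrev TState (Q C : Type) := Q × (C → ℝ)

/-- `A.step s d a s'`: from state `s`, delaying `d` and reading `a`, the automaton can
move to state `s'` via some transition whose guard is satisfied by `s.2 + d`,
resetting the clocks in the reset set. -/
def TBA.step {α Q C : Type} (A : TBA α Q C) (s : TState Q C) (d : ℝ) (a : α)
    (s' : TState Q C) : Prop :=
  ∃ t ∈ A.trans, t.src = s.1 ∧ t.dst = s'.1 ∧ t.sym = a ∧
    t.guard.sat (fun c => s.2 c + d) ∧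
    (∀ c ∈ t.reset, s'.2 c = 0) ∧ (∀ c ∉ t.reset, s'.2 c = s.2 c + d)

/-- `prevT τ i` is τ_{i-1} with the convention τ₀ = 0 (0-indexed: position `i` of the
word has predecessor timestamp `prevT τ i`). -/
def prevT (τ : ℕ → ℝ) (i : ℕ) : ℝ := if i = 0 then 0 else τ (i - 1)

/-- `r` is a run of `A` on the infinite timed word `ρ` (from the state `r 0`). -/
def TBA.InfRun {α Q C : Type} (A : TBA α Q C) (ρ : InfTW α) (r : ℕ → TState Q C) : Prop :=
  ∀ i, A.step (r i) (ρ.2 i - prevT ρ.2 i) (ρ.1 i) (r (i + 1))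

/-- `r` is an accepting run of `A` on `ρ`: some accepting location occurs infinitely often. -/
def TBA.AccRun {α Q C : Type} (A : TBA α Q C) (ρ : InfTW α) (r : ℕ → TState Q C) : Prop :=
  A.InfRun ρ r ∧ ∃ q ∈ A.final, ∀ n, ∃ m, n ≤ m ∧ (r m).1 = q

/-- The language of `A` from a state `s`. -/
def TBA.Lang {α Q C : Type} (A : TBA α Q C) (s : TState Q C) : Set (InfTW α) :=
  {ρ | IsInfTW ρ ∧ ∃ r, r 0 = s ∧ A.AccRun ρ r}

/-- The language of `A` (from its initial locations, with all clocks 0). -/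
def TBA.LangInit {α Q C : Type} (A : TBA α Q C) : Set (InfTW α) :=
  {ρ | ∃ q ∈ A.init, ρ ∈ A.Lang (q, fun _ => 0)}

/-- `r` is a run of `A` over the finite timed word `ρ` (from the state `r 0`),
consisting of steps `r 0, …, r (ρ.len + 1)`. -/
def TBA.FinRun {α Q C : Type} (A : TBA α Q C) (ρ : FinTW α) (r : ℕ → TState Q C) : Prop :=
  ∀ i ≤ ρ.len, A.step (r i) (ρ.time i - prevT ρ.time i) (ρ.sym i) (r (i + 1))

/-- The state estimate `Terminal(A, ρ)`: all states reachable by a run of `A` over `ρ`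
from some initial state (initial location, all clocks 0). -/
def TBA.Terminal {α Q C : Type} (A : TBA α Q C) (ρ : FinTW α) : Set (TState Q C) :=
  {s | ∃ r : ℕ → TState Q C, (r 0).1 ∈ A.init ∧ (∀ c, (r 0).2 c = 0) ∧
        A.FinRun ρ r ∧ r (ρ.len + 1) = s}

/-- `NonEmpty(A)`: the states of `A` with a non-empty language. -/
def TBA.NonEmptySt {α Q C : Type} (A : TBA α Q C) : Set (TState Q C) :=
  {s | (A.Lang s).Nonempty}

/-! ## Statement 1 -/

/-- The automaton `A_D`: locations `A = true` (initial, accepting) and `B = false`,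
single clock `z : Unit`; for every symbol: `A → B` resetting `z`, `B → B` with `z < 1`,
and `B → A` with `z ≥ 1`. -/
def AD (α : Type) : TBA α Bool Unit where
  init := {true}
  final := {true}
  trans := {t | (t.src = true ∧ t.dst = false ∧ t.reset = Set.univ ∧ t.guard = .tt) ∨
                (t.src = false ∧ t.dst = false ∧ t.reset = ∅ ∧ t.guard = .atom () .lt 1) ∨
                (t.src = false ∧ t.dst = true ∧ t.reset = ∅ ∧ t.guard = .atom () .ge 1)}

/-!
`A_D` is deterministic and total: from `A` it moves to `B` resetting `z`, and from `B` the guards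
`z < 1` and `z ≥ 1` are complementary. So every word has exactly one run from `(A, 0)`, and it
returns to `A` exactly when the clock, reset on leaving `A`, has reached `1`. If the timestamps
are bounded, they all lie within `1` of the timestamp of some visit to `A`, after which the run is stuck
in `B`; if they diverge, the clock in `B` eventually reaches `1`.
-/

noncomputable def adNext (d : ℝ) (s : TState Bool Unit) : TState Bool Unit :=
  if s.1 then (false, fun _ => 0) else (decide (1 ≤ s.2 () + d), fun _ => s.2 () + d)

lemma adNext_of_false {d : ℝ} {s : TState Bool Unit} (hs : s.1 = false) :
    adNext d s = (decide (1 ≤ s.2 () + d), fun _ => s.2 () + d) := by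
  simp [adNext, hs]

lemma AD_step_iff {α : Type} {s s' : TState Bool Unit} {d : ℝ} {a : α} :
    (AD α).step s d a s' ↔ s' = adNext d s := by
  obtain ⟨b, c⟩ := s
  obtain ⟨b', c'⟩ := s'
  constructor
  · rintro ⟨⟨src, dst, sym, reset, guard⟩, ht, rfl, rfl, -, hg, hres, hnres⟩
    rcases ht with ⟨rfl, rfl, rfl, rfl⟩ | ⟨rfl, rfl, rfl, rfl⟩ | ⟨rfl, rfl, rfl, rfl⟩
    · simpa [adNext, funext_iff] using hres
    · simp only [CC.sat, Cmp.sat, Nat.cast_one] at hg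
      simpa [adNext, funext_iff, hg] using hnres
    · simp only [CC.sat, Cmp.sat, Nat.cast_one] at hg
      simpa [adNext, funext_iff, hg] using hnres
  · rintro h
    cases b
    · by_cases hz : 1 ≤ c () + d
      · refine ⟨⟨false, true, a, ∅, .atom () .ge 1⟩, Or.inr (Or.inr ⟨rfl, rfl, rfl, rfl⟩),
          rfl, ?_⟩
        simp_all [adNext, CC.sat, Cmp.sat]
      · refine ⟨⟨false, false, a, ∅, .atom () .lt 1⟩, Or.inr (Or.inl ⟨rfl, rfl, rfl, rfl⟩),
          rfl, ?_⟩
        simp_all [adNext, CC.sat, Cmp.sat]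
    · refine ⟨⟨true, false, a, Set.univ, .tt⟩, Or.inl ⟨rfl, rfl, rfl, rfl⟩, rfl, ?_⟩
      simp_all [adNext, CC.sat]

noncomputable def adRun (τ : ℕ → ℝ) : ℕ → TState Bool Unit
  | 0 => (true, fun _ => 0)
  | i + 1 => adNext (τ i - prevT τ i) (adRun τ i)

lemma eq_adRun_of_infRun {α : Type} {ρ : InfTW α} {r : ℕ → TState Bool Unit}
    (hr : (AD α).InfRun ρ r) (h0 : r 0 = (true, fun _ => 0)) : r = adRun ρ.2 := by
  funext i
  induction i with
  | zero => exact h0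
  | succ i ih => rw [adRun, ← ih, ← AD_step_iff]; exact hr i

lemma AD_langInit (α : Type) :
    (AD α).LangInit = {ρ | IsInfTW ρ ∧ ∃ᶠ m in atTop, (adRun ρ.2 m).1 = true} := by
  ext ρ
  constructor
  · rintro ⟨q, rfl, hρ, r, hr0, hrun, q', rfl, hacc⟩
    rw [eq_adRun_of_infRun hrun hr0] at hacc
    exact ⟨hρ, frequently_atTop.2 hacc⟩
  · rintro ⟨hρ, hacc⟩
    exact ⟨true, rfl, hρ, adRun ρ.2, rfl, fun i => AD_step_iff.2 rfl, true, rfl,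
      frequently_atTop.1 hacc⟩

lemma adRun_stuck {τ : ℕ → ℝ} {m : ℕ} (hm : (adRun τ m).1 = true)
    (hτ : ∀ j, τ j < τ m + 1) (j : ℕ) :
    adRun τ (m + 1 + j) = (false, fun _ => τ (m + j) - τ m) := by
  induction j with
  | zero => simp [adRun, adNext, hm]
  | succ j ih =>
    have hclock : τ (m + j) - τ m + (τ (m + 1 + j) - τ (m + j)) = τ (m + 1 + j) - τ m := by ring
    rw [show m + 1 + (j + 1) = m + 1 + j + 1 by ring, adRun, ih, adNext_of_false rfl,
      show prevT τ (m + 1 + j) = τ (m + j) by simp [prevT, Nat.add_right_comm], hclock]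
    simp only [show m + (j + 1) = m + 1 + j by ring, Prod.mk.injEq, decide_eq_false_iff_not,
      not_le, and_true]
    linarith [hτ (m + 1 + j)]

lemma tendsto_of_frequently_adRun {τ : ℕ → ℝ} (hτ : Monotone τ)
    (hacc : ∃ᶠ m in atTop, (adRun τ m).1 = true) : Tendsto τ atTop atTop := by
  by_contra hdiv
  obtain ⟨b, hb⟩ : ∃ b, ∀ a, τ a < b := by
    simpa [tendsto_atTop_atTop_iff_of_monotone hτ] using hdiv
  have hbdd : BddAbove (Set.range τ) := ⟨b, Set.forall_mem_range.2 fun a => (hb a).le⟩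
  obtain ⟨N, hN⟩ := exists_lt_of_lt_ciSup (sub_one_lt (⨆ i, τ i))
  obtain ⟨m, hNm, hm⟩ := hacc.forall_exists_of_atTop N
  have hclose : ∀ j, τ j < τ m + 1 := fun j => by
    linarith [le_ciSup hbdd j, hτ hNm]
  obtain ⟨k, hmk, hk⟩ := hacc.forall_exists_of_atTop (m + 1)
  obtain ⟨j, rfl⟩ := Nat.exists_eq_add_of_le hmk
  simp [adRun_stuck hm hclose j] at hk

lemma adRun_clock_of_forall_false {τ : ℕ → ℝ} {n : ℕ}
    (hB : ∀ j ≥ n, (adRun τ j).1 = false) (j : ℕ) :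
    (adRun τ (n + j)).2 () = (adRun τ n).2 () + prevT τ (n + j) - prevT τ n := by
  induction j with
  | zero => simp
  | succ j ih =>
    rw [← add_assoc, adRun, adNext_of_false (hB _ (by omega)), ih]
    simp only [prevT, Nat.add_eq_zero_iff, one_ne_zero, and_false, if_false,
      Nat.add_sub_cancel]
    ring

lemma frequently_adRun_of_tendsto {τ : ℕ → ℝ} (hτ : Tendsto τ atTop atTop) :
    ∃ᶠ m in atTop, (adRun τ m).1 = true := by
  by_contra hacc
  obtain ⟨n, hB⟩ : ∃ n, ∀ j ≥ n, (adRun τ j).1 = false := by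
    simpa [Filter.not_frequently, eventually_atTop] using hacc
  have hbound : ∀ j, τ (n + j) < 1 - (adRun τ n).2 () + prevT τ n := fun j => by
    have hnext := hB (n + j + 1) (by omega)
    rw [adRun, adNext_of_false (hB _ (by omega)), adRun_clock_of_forall_false hB j] at hnext
    simp only [decide_eq_false_iff_not, not_le] at hnext
    linarith
  obtain ⟨k, hk, hnk⟩ :=
    ((hτ.eventually_ge_atTop (1 - (adRun τ n).2 () + prevT τ n)).and
      (eventually_ge_atTop n)).exists
  obtain ⟨j, rfl⟩ := Nat.exists_eq_add_of_le hnk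
  exact (hbound j).not_ge hk

theorem stmt1_general (α : Type) :
    (AD α).LangInit = {μ : InfTW α | IsDivergent μ} := by
  rw [AD_langInit]
  ext ρ
  exact and_congr_right fun hρ =>
    ⟨tendsto_of_frequently_adRun hρ.2.monotone, frequently_adRun_of_tendsto⟩

theorem stmt1 (α : Type) [Finite α] [Nonempty α] :
    (AD α).LangInit = {μ : InfTW α | IsDivergent μ} :=
  stmt1_general α
end

section
/- Let A = (Q, Q₀, Σ, C, Δ, F) be a TBA. For a set X of states of A, let Pre⁺(X) denote the set of states from which some state of X is reachable by a finite run with at least one timed step, and let Φ(X) = Pre⁺(X ∩ {(q,v) : q ∈ F}). Then Φ is monotone with respect to set inclusion, and its greatest fixpoint equals NonEmpty(A), the set of states of A with nonempty language. (This is the correctness statement behind Theorem 3: Reach_A^∞ = NonEmpty(A).) -/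
open Filter

/-! ## Statement 4 -/

/-- A single timed step with positive delay. -/
def TBA.step1 {α Q C : Type} (A : TBA α Q C) (s s' : TState Q C) : Prop :=
  ∃ d, 0 < d ∧ ∃ a, A.step s d a s'

/-- `Pre⁺(X)`: the states from which some state of `X` is reachable by a finite run
with at least one timed step. -/
def TBA.PrePlus {α Q C : Type} (A : TBA α Q C) (X : Set (TState Q C)) : Set (TState Q C) :=
  {s | ∃ s' ∈ X, Relation.TransGen A.step1 s s'}

/-- `Φ(X) = Pre⁺(X ∩ {(q,v) : q ∈ F})`. -/
def TBA.Phi {α Q C : Type} (A : TBA α Q C) (X : Set (TState Q C)) : Set (TState Q C) :=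
  A.PrePlus (X ∩ {s | s.1 ∈ A.final})


/-! ## Auxiliary lemmas -/

section Aux

variable {α Q C : Type} {A : TBA α Q C}

lemma prevT_lt {τ : ℕ → ℝ} (h0 : 0 < τ 0) (hm : StrictMono τ) (i : ℕ) :
    prevT τ i < τ i := by
  unfold prevT
  rcases Nat.eq_zero_or_pos i with h | h
  · simp [h, h0]
  · rw [if_neg h.ne']
    exact hm (Nat.sub_lt h Nat.one_pos)

lemma step1_of_infRun {ρ : InfTW α} {r : ℕ → TState Q C} (hρ : IsInfTW ρ)
    (hr : A.InfRun ρ r) (i : ℕ) : A.step1 (r i) (r (i + 1)) :=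
  ⟨ρ.2 i - prevT ρ.2 i, sub_pos.mpr (prevT_lt hρ.1 hρ.2 i), ρ.1 i, hr i⟩

lemma transGen_of_infRun {ρ : InfTW α} {r : ℕ → TState Q C} (hρ : IsInfTW ρ)
    (hr : A.InfRun ρ r) : ∀ m, 0 < m → Relation.TransGen A.step1 (r 0) (r m) := by
  intro m hm
  induction m with
  | zero => omega
  | succ n ih =>
    rcases Nat.eq_zero_or_pos n with h | h
    · subst h; exact Relation.TransGen.single (step1_of_infRun hρ hr 0)
    · exact (ih h).tail (step1_of_infRun hρ hr n)

/-- Every state along an accepting run has nonempty language. -/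
lemma lang_shift {ρ : InfTW α} {r : ℕ → TState Q C} (hρ : IsInfTW ρ)
    (hr : A.InfRun ρ r) {q : Q} (hq : q ∈ A.final)
    (hinf : ∀ n, ∃ m, n ≤ m ∧ (r m).1 = q) (m : ℕ) : (A.Lang (r m)).Nonempty := by
  refine ⟨(fun i => ρ.1 (m + i), fun i => ρ.2 (m + i) - prevT ρ.2 m), ?_,
    fun i => r (m + i), by simp, ?_, q, hq, ?_⟩
  · constructor
    · simpa using sub_pos.mpr (prevT_lt hρ.1 hρ.2 m)
    · intro i j hij
      exact sub_lt_sub_right (hρ.2 (by omega)) _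
  · intro i
    have h := hr (m + i)
    rcases i with _ | j
    · simpa [prevT] using h
    · have h1 : prevT (fun i => ρ.2 (m + i) - prevT ρ.2 m) (j + 1) =
          ρ.2 (m + j) - prevT ρ.2 m := by
        unfold prevT; simp
      have h2 : prevT ρ.2 (m + (j + 1)) = ρ.2 (m + j) := by
        unfold prevT
        rw [if_neg (by omega)]
        congr 1
      simp only [h1]
      have : ρ.2 (m + (j + 1)) - prevT ρ.2 m - (ρ.2 (m + j) - prevT ρ.2 m) =
          ρ.2 (m + (j + 1)) - prevT ρ.2 (m + (j + 1)) := by rw [h2]; ring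
      rw [this]
      exact h
  · intro n
    obtain ⟨m', hm', hq'⟩ := hinf (m + n)
    refine ⟨m' - m, by omega, ?_⟩
    show (r (m + (m' - m))).1 = q
    have : m + (m' - m) = m' := by omega
    rw [this]
    exact hq'

/-- Prepending a single positive-delay step preserves nonemptiness of the language. -/
lemma lang_prepend {s s' : TState Q C} {d : ℝ} {a : α} (hd : 0 < d)
    (hstep : A.step s d a s') (h : (A.Lang s').Nonempty) : (A.Lang s).Nonempty := by
  obtain ⟨ρ, hρ, r, hr0, hrun, q, hq, hacc⟩ := h
  refine ⟨(fun i => match i with | 0 => a | i + 1 => ρ.1 i,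
           fun i => match i with | 0 => d | i + 1 => ρ.2 i + d), ?_,
    fun i => match i with | 0 => s | i + 1 => r i, rfl, ?_, q, hq, ?_⟩
  · refine ⟨hd, strictMono_nat_of_lt_succ ?_⟩
    intro i
    rcases i with _ | j
    · simpa using hρ.1
    · simpa using hρ.2 (Nat.lt_succ_self j)
  · intro i
    rcases i with _ | j
    · simpa [prevT, hr0] using hstep
    · have h := hrun j
      rcases j with _ | k
      · simpa [prevT] using h
      · have : (ρ.2 (k + 1) + d) - prevT (fun i => match i with | 0 => d | i + 1 => ρ.2 i + d)
            (k + 1 + 1) = ρ.2 (k + 1) - prevT ρ.2 (k + 1) := by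
          simp [prevT]
        simpa [this] using h
  · intro n
    obtain ⟨m, hm, hq'⟩ := hacc n
    exact ⟨m + 1, by omega, hq'⟩

lemma lang_transGen {s s' : TState Q C} (h : Relation.TransGen A.step1 s s')
    (h' : (A.Lang s').Nonempty) : (A.Lang s).Nonempty := by
  induction h with
  | single h =>
    obtain ⟨d, hd, a, hstep⟩ := h
    exact lang_prepend hd hstep h'
  | tail _ h ih =>
    obtain ⟨d, hd, a, hstep⟩ := h
    exact ih (lang_prepend hd hstep h')

/-- From an infinite `step1`-chain hitting `F` infinitely often, build an accepting run. -/
lemma lang_of_chain [Finite Q] {s : TState Q C} (u : ℕ → TState Q C) (h0 : u 0 = s)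
    (hstep : ∀ i, A.step1 (u i) (u (i + 1)))
    (hF : ∀ n, ∃ m, n ≤ m ∧ (u m).1 ∈ A.final) : (A.Lang s).Nonempty := by
  choose d hd a ha using hstep
  choose f hf hfF using hF
  -- pigeonhole: some accepting location occurs infinitely often
  obtain ⟨q, hqinf⟩ := Finite.exists_infinite_fiber (fun n => (u (f n)).1)
  have hSinf : {n : ℕ | (u (f n)).1 = q}.Infinite := by
    rw [← Set.infinite_coe_iff]
    exact hqinf
  have hq : q ∈ A.final := by
    obtain ⟨n, hn⟩ := hSinf.nonempty
    exact hn ▸ hfF n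
  set τ : ℕ → ℝ := fun i => ∑ j ∈ Finset.range (i + 1), d j with hτ
  have hτs : ∀ i, τ (i + 1) = τ i + d (i + 1) := fun i => Finset.sum_range_succ d (i + 1)
  have hdelay : ∀ i, τ i - prevT τ i = d i := by
    intro i
    rcases i with _ | j
    · simp [prevT, hτ]
    · rw [hτs j]
      simp [prevT]
  refine ⟨(a, τ), ⟨by simp [hτ, Finset.sum_range_one, hd 0], strictMono_nat_of_lt_succ ?_⟩,
    u, h0, ?_, q, hq, ?_⟩
  · intro i
    show τ i < τ (i + 1)
    rw [hτs i]
    linarith [hd (i + 1)]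
  · intro i
    rw [hdelay i]
    exact ha i
  · intro n
    obtain ⟨m, hmS, hmgt⟩ := hSinf.exists_gt n
    exact ⟨f m, by have := hf m; omega, hmS⟩

/-- Unfold a `TransGen` chain into a finite path. -/
lemma transGen_path {s s' : TState Q C} (h : Relation.TransGen A.step1 s s') :
    ∃ k, ∃ p : ℕ → TState Q C, 1 ≤ k ∧ p 0 = s ∧ p k = s' ∧
      ∀ i < k, A.step1 (p i) (p (i + 1)) := by
  induction h with
  | @single b h =>
    refine ⟨1, fun i => if i = 0 then s else b, le_refl 1, by simp, by simp, ?_⟩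
    intro i hi
    interval_cases i
    simpa using h
  | @tail b c _ hbc ih =>
    obtain ⟨k, p, hk, hp0, hpk, hps⟩ := ih
    refine ⟨k + 1, fun i => if i ≤ k then p i else c, by omega,
      by simp [hp0], by simp, ?_⟩
    intro i hi
    rcases lt_or_eq_of_le (Nat.lt_succ_iff.mp hi) with h' | h'
    · simpa [Nat.le_of_lt h', Nat.succ_le_of_lt h'] using hps i h'
    · subst h'
      simpa [hpk] using hbc

/-- Flatten blocks of paths into one infinite chain. -/
lemma chain_of_blocks (k : ℕ → ℕ) (hk : ∀ n, 1 ≤ k n) (p : ℕ → ℕ → TState Q C)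
    (hlink : ∀ n, p n (k n) = p (n + 1) 0)
    (hstep : ∀ n, ∀ i < k n, A.step1 (p n i) (p n (i + 1))) :
    ∃ u : ℕ → TState Q C, u 0 = p 0 0 ∧ (∀ i, A.step1 (u i) (u (i + 1))) ∧
      ∀ n, ∃ m, n ≤ m ∧ u m = p n 0 := by
  set S : ℕ → ℕ := fun n => ∑ j ∈ Finset.range n, k j with hS
  have hS0 : S 0 = 0 := by simp [hS]
  have hSs : ∀ n, S (n + 1) = S n + k n := fun n => Finset.sum_range_succ k n
  have hSmono : Monotone S := by
    intro m n hmn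
    exact Finset.sum_le_sum_of_subset (Finset.range_subset_range.mpr hmn)
  have hSge : ∀ n, n ≤ S n := by
    intro n
    calc n = ∑ _j ∈ Finset.range n, 1 := by simp
    _ ≤ S n := Finset.sum_le_sum (fun j _ => hk j)
  have hex : ∀ i, ∃ n, i < S (n + 1) := fun i => ⟨i, by have := hSge (i + 1); omega⟩
  set blk : ℕ → ℕ := fun i => Nat.find (hex i) with hblk
  have hblk1 : ∀ i, i < S (blk i + 1) := fun i => Nat.find_spec (hex i)
  have hblk2 : ∀ i, S (blk i) ≤ i := by
    intro i
    rcases Nat.eq_zero_or_pos (blk i) with h | h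
    · rw [h, hS0]; omega
    · have := Nat.find_min (hex i) (show blk i - 1 < blk i by omega)
      have h1 : blk i - 1 + 1 = blk i := by omega
      rw [h1] at this
      omega
  have hblkeq : ∀ i n, S n ≤ i → i < S (n + 1) → blk i = n := by
    intro i n h1 h2
    rw [hblk]
    rw [Nat.find_eq_iff]
    refine ⟨h2, ?_⟩
    intro m hm
    have := hSmono (show m + 1 ≤ n by omega)
    omega
  set u : ℕ → TState Q C := fun i => p (blk i) (i - S (blk i)) with hu
  have hub : ∀ n, u (S n) = p n 0 := by
    intro n
    have he : blk (S n) = n := hblkeq (S n) n (le_refl _) (by rw [hSs]; have := hk n; omega)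
    simp [hu, he]
  have hu00 : u 0 = p 0 0 := by have := hub 0; rwa [hS0] at this
  refine ⟨u, hu00, ?_, ?_⟩
  · intro i
    set n := blk i with hn
    have h1 : S n ≤ i := hblk2 i
    have h2 : i < S (n + 1) := hblk1 i
    have hjlt : i - S n < k n := by rw [hSs] at h2; omega
    rcases lt_or_eq_of_le (Nat.succ_le_of_lt hjlt) with h' | h'
    · -- stay in block n
      have he : blk (i + 1) = n := by
        refine hblkeq (i + 1) n (by omega) ?_
        rw [hSs]; omega
      have : u (i + 1) = p n (i - S n + 1) := by
        rw [hu]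
        simp only
        rw [he]
        congr 1
        omega
      rw [this]
      exact hstep n (i - S n) hjlt
    · -- cross to block n+1
      have hi1 : i + 1 = S (n + 1) := by rw [hSs]; omega
      have : u (i + 1) = p n (k n) := by
        rw [hi1, hub (n + 1), ← hlink n]
      rw [this]
      have h'' : i - S n + 1 = k n := h'
      rw [← h'']
      exact hstep n (i - S n) hjlt
  · intro n
    exact ⟨S n, hSge n, hub n⟩

end Aux

theorem stmt4 {α Q C : Type} [Finite α] [Nonempty α] [Finite Q] [Finite C]
    (A : TBA α Q C) (hfin : A.trans.Finite) :
    Monotone A.Phi ∧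
    A.Phi A.NonEmptySt = A.NonEmptySt ∧
    ∀ X : Set (TState Q C), A.Phi X = X → X ⊆ A.NonEmptySt := by
  refine ⟨?_, ?_, ?_⟩
  · -- Monotone
    intro X Y hXY s hs
    obtain ⟨s', ⟨hs'X, hs'F⟩, htg⟩ := hs
    exact ⟨s', ⟨hXY hs'X, hs'F⟩, htg⟩
  · -- Fixpoint
    apply Set.eq_of_subset_of_subset
    · rintro s ⟨s', ⟨hs'NE, _⟩, htg⟩
      exact lang_transGen htg hs'NE
    · rintro s ⟨ρ, hρ, r, hr0, hrun, q, hq, hacc⟩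
      obtain ⟨m, hm, hmq⟩ := hacc 1
      refine ⟨r m, ⟨lang_shift hρ hrun hq hacc m, show (r m).1 ∈ A.final by rw [hmq]; exact hq⟩, ?_⟩
      rw [← hr0]
      exact transGen_of_infRun hρ hrun m (by omega)
  · -- Any fixpoint is included in NonEmptySt
    intro X hX s hs
    have hPre : ∀ x ∈ X, ∃ x', (x' ∈ X ∧ x'.1 ∈ A.final) ∧ Relation.TransGen A.step1 x x' := by
      intro x hx
      rw [← hX] at hx
      obtain ⟨x', ⟨hx'X, hx'F⟩, htg⟩ := hx
      exact ⟨x', ⟨hx'X, hx'F⟩, htg⟩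
    choose g hg htg using hPre
    -- iterate
    let f : ℕ → {x : TState Q C // x ∈ X} := fun n =>
      Nat.rec ⟨s, hs⟩ (fun _ x => ⟨g x.1 x.2, (hg x.1 x.2).1⟩) n
    have hff : ∀ n, f (n + 1) = ⟨g (f n).1 (f n).2, (hg (f n).1 (f n).2).1⟩ := fun n => rfl
    have hfF : ∀ n, ((f (n + 1)).1).1 ∈ A.final := by
      intro n
      rw [hff n]
      exact (hg (f n).1 (f n).2).2
    have hftg : ∀ n, Relation.TransGen A.step1 (f n).1 (f (n + 1)).1 := by
      intro n
      rw [hff n]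
      exact htg (f n).1 (f n).2
    -- unfold each TransGen into a path and flatten
    choose k p hk hp0 hpk hps using fun n => transGen_path (hftg n)
    have hlink : ∀ n, p n (k n) = p (n + 1) 0 := by
      intro n
      rw [hpk n, hp0 (n + 1)]
    obtain ⟨u, hu0, hustep, huhit⟩ := chain_of_blocks k hk p hlink hps
    have hu0' : u 0 = s := by rw [hu0, hp0 0]; rfl
    apply lang_of_chain u hu0' hustep
    intro n
    obtain ⟨m, hm, hum⟩ := huhit (n + 1)
    refine ⟨m, by omega, ?_⟩
    rw [hum, hp0 (n + 1)]
    exact hfF n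
end

section
/- Let Σ be a finite nonempty alphabet, φ ⊆ TΣ^ω, and let A be a complete TBA with L(A) = φ ∩ T_DΣ^ω. Then for every finite timed word ρ ∈ TΣ^*: d_A(Terminal(A, ρ)) ≤ D^ρ_{φ̄}, where D^ρ_{φ̄} = inf{τ(ρ') : ρ' ∈ TΣ^* and ρ·ρ'·μ ∉ φ for all μ ∈ T_DΣ^ω} (infimum in [0,+∞], inf ∅ = +∞). (Applying this to automata for φ and for its complement yields both inequalities of Theorem 4: the supremal minimum time for the current state estimate to leave the nonempty-language region is a guaranteed minimum time before a conclusive verdict.) -/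
open Filter

/-! ## Statements 5/6 preliminaries -/

/-- One timed step together with accumulated elapsed time. -/
def TBA.stepT {α Q C : Type} (A : TBA α Q C) (p p' : TState Q C × ℝ) : Prop :=
  ∃ d, 0 < d ∧ (∃ a, A.step p.1 d a p'.1) ∧ p'.2 = p.2 + d

/-- `d_A(q,v)`: the infimum (in `[0,∞]`) of total elapsed times `d₁ + … + d_k + d`
after which a state outside `NonEmpty(A)` can be reached from `(q,v)` by timed steps
followed by a delay `d ≥ 0`. -/
noncomputable def TBA.dState {α Q C : Type} (A : TBA α Q C) (s : TState Q C) : ENNReal :=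
  sInf {c | ∃ (s' : TState Q C) (t d : ℝ),
    Relation.ReflTransGen A.stepT (s, 0) (s', t) ∧ 0 ≤ d ∧
    (s'.1, fun x => s'.2 x + d) ∉ A.NonEmptySt ∧ c = ENNReal.ofReal (t + d)}

/-- `d_A(S)` for a set `S` of states (sup ∅ = 0). -/
noncomputable def TBA.dSet {α Q C : Type} (A : TBA α Q C) (S : Set (TState Q C)) : ENNReal :=
  ⨆ s ∈ S, A.dState s

/-- `D^ρ_{φ̄}`: the infimum (in `[0,∞]`, inf ∅ = ∞) of durations of finite continuations
`ρ'` such that every divergent continuation of `ρ·ρ'` avoids `φ`. -/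
noncomputable def Dbar {α : Type} (φ : Set (InfTW α)) (ρ : FinTW α) : ENNReal :=
  sInf {c | ∃ ρ' : FinTW α, IsFinTW ρ' ∧
    (∀ μ, IsDivergent μ → (ρ.catFin ρ').catInf μ ∉ φ) ∧ c = ENNReal.ofReal ρ'.dur}

/-- `D^ρ_φ`: the infimum (in `[0,∞]`, inf ∅ = ∞) of durations of finite continuations
`ρ'` such that every divergent continuation of `ρ·ρ'` lies in `φ`. -/
noncomputable def Dphi {α : Type} (φ : Set (InfTW α)) (ρ : FinTW α) : ENNReal :=
  sInf {c | ∃ ρ' : FinTW α, IsFinTW ρ' ∧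
    (∀ μ, IsDivergent μ → (ρ.catFin ρ').catInf μ ∈ φ) ∧ c = ENNReal.ofReal ρ'.dur}

/-- `A` is complete: in every state, for every symbol and positive delay,
some transition is enabled. -/
def TBA.Complete {α Q C : Type} (A : TBA α Q C) : Prop :=
  ∀ (s : TState Q C) (a : α) (d : ℝ), 0 < d →
    ∃ t ∈ A.trans, t.src = s.1 ∧ t.sym = a ∧ t.guard.sat (fun c => s.2 c + d)

/-- `A` is deterministic: in every state, for every symbol and positive delay,
at most one transition is enabled. -/
def TBA.Deterministic {α Q C : Type} (A : TBA α Q C) : Prop :=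
  ∀ (s : TState Q C) (a : α) (d : ℝ), 0 < d →
    ∀ t1 ∈ A.trans, ∀ t2 ∈ A.trans,
      t1.src = s.1 → t2.src = s.1 → t1.sym = a → t2.sym = a →
      t1.guard.sat (fun c => s.2 c + d) → t2.guard.sat (fun c => s.2 c + d) → t1 = t2

/-! From a state `s` of `Terminal(A, ρ)`, completeness lets `A` read any continuation `ρ'`,
reaching a state `s'` after elapsed time `τ(ρ')`. If every divergent continuation of `ρ·ρ'` avoids
`φ`, then `s'` has empty language: an accepting run from `s'` on `μ` would splice with the runs
over `ρ` and `ρ'` into an accepting run on `ρ·ρ'·μ`, which lies in `L(A) ⊆ φ` and has the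
divergent tail `μ`. Hence `d_A(s) ≤ τ(ρ')`. -/

open Relation

section Words

variable {α : Type}

lemma IsFinTW.delay_pos {ρ : FinTW α} (hρ : IsFinTW ρ) {i : ℕ} (hi : i ≤ ρ.len) :
    0 < ρ.time i - prevT ρ.time i := by
  cases i with
  | zero => simpa [prevT] using hρ.1
  | succ j => simpa [prevT] using hρ.2 j hi

lemma prevT_succ (τ : ℕ → ℝ) (i : ℕ) : prevT τ (i + 1) = τ i := by
  simp [prevT]

namespace FinTW

variable (ρ : FinTW α) (μ : InfTW α)

lemma catInf_fst_of_le {i : ℕ} (hi : i ≤ ρ.len) : (ρ.catInf μ).1 i = ρ.sym i := if_pos hi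

lemma catInf_snd_of_le {i : ℕ} (hi : i ≤ ρ.len) : (ρ.catInf μ).2 i = ρ.time i := if_pos hi

lemma catInf_fst_add (j : ℕ) : (ρ.catInf μ).1 (ρ.len + j + 1) = μ.1 j := by
  simp [catInf, show ρ.len + j + 1 - ρ.len - 1 = j by omega]

lemma catInf_snd_add (j : ℕ) : (ρ.catInf μ).2 (ρ.len + j + 1) = ρ.dur + μ.2 j := by
  simp [catInf, show ρ.len + j + 1 - ρ.len - 1 = j by omega]

lemma prevT_catInf_snd_of_le {i : ℕ} (hi : i ≤ ρ.len) :
    prevT (ρ.catInf μ).2 i = prevT ρ.time i := by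
  cases i with
  | zero => rfl
  | succ i => rw [prevT_succ, prevT_succ, catInf_snd_of_le _ _ (by omega)]

lemma prevT_catInf_snd_add (j : ℕ) :
    prevT (ρ.catInf μ).2 (ρ.len + j + 1) = ρ.dur + prevT μ.2 j := by
  cases j with
  | zero => simp [catInf_snd_of_le, dur, prevT]
  | succ j => rw [← add_assoc, prevT_succ, prevT_succ, catInf_snd_add]

lemma catFin_catInf (ρ' : FinTW α) : (ρ.catFin ρ').catInf μ = ρ.catInf (ρ'.catInf μ) := by
  have hlen : (ρ.catFin ρ').len = ρ.len + 1 + ρ'.len := rfl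
  have hdur : (ρ.catFin ρ').dur = ρ.dur + ρ'.dur := by
    simp [dur, catFin, show ¬ ρ.len + 1 + ρ'.len ≤ ρ.len by omega,
      show ρ.len + 1 + ρ'.len - ρ.len - 1 = ρ'.len by omega]
  have hidx (i : ℕ) : i - (ρ.len + 1 + ρ'.len) - 1 = i - ρ.len - 1 - ρ'.len - 1 := by omega
  ext i <;> simp only [catInf, hlen, hdur, hidx] <;> simp only [catFin] <;>
    split_ifs <;> first | rfl | omega | ring

variable {ρ μ}

lemma catInf_isInfTW (hρ : IsFinTW ρ) (hμ : IsInfTW μ) : IsInfTW (ρ.catInf μ) := by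
  refine ⟨by simpa [catInf_snd_of_le] using hρ.1, strictMono_nat_of_lt_succ fun i => ?_⟩
  rcases lt_trichotomy i ρ.len with hi | rfl | hi
  · rw [catInf_snd_of_le _ _ hi.le, catInf_snd_of_le _ _ hi]
    exact hρ.2 i hi
  · have h := catInf_snd_add ρ μ 0
    rw [add_zero] at h
    rw [catInf_snd_of_le _ _ le_rfl, h, dur]
    exact lt_add_of_pos_right _ hμ.1
  · obtain ⟨j, rfl⟩ := Nat.exists_eq_add_of_lt hi
    rw [catInf_snd_add, show ρ.len + j + 1 + 1 = ρ.len + (j + 1) + 1 by ring, catInf_snd_add]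
    exact add_lt_add_right (hμ.2 j.lt_succ_self) _

lemma isDivergent_of_catInf (hμ : IsInfTW μ) (h : IsDivergent (ρ.catInf μ)) : IsDivergent μ := by
  refine ⟨hμ, ?_⟩
  have hshift := (tendsto_add_atTop_iff_nat (ρ.len + 1)).2 h.2
  simp only [add_comm _ (ρ.len + 1), add_right_comm ρ.len 1, catInf_snd_add] at hshift
  simpa using tendsto_atTop_add_const_left atTop (-ρ.dur) hshift

end FinTW

end Words

namespace TBA

variable {α Q C : Type} {A : TBA α Q C}

lemma Complete.exists_step (hA : A.Complete) (s : TState Q C) (a : α) {d : ℝ} (hd : 0 < d) :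
    ∃ s', A.step s d a s' := by
  classical
  obtain ⟨t, ht, hsrc, hsym, hg⟩ := hA s a d hd
  exact ⟨(t.dst, fun c => if c ∈ t.reset then 0 else s.2 c + d),
    t, ht, hsrc, rfl, hsym, hg, fun c hc => if_pos hc, fun c hc => if_neg hc⟩

lemma Complete.exists_finRun (hA : A.Complete) {ρ : FinTW α} (hρ : IsFinTW ρ)
    (s : TState Q C) : ∃ r, r 0 = s ∧ A.FinRun ρ r := by
  have hnext : ∀ i (x : TState Q C), ∃ y,
      i ≤ ρ.len → A.step x (ρ.time i - prevT ρ.time i) (ρ.sym i) y := by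
    intro i x
    by_cases hi : i ≤ ρ.len
    · obtain ⟨y, hy⟩ := hA.exists_step x (ρ.sym i) (hρ.delay_pos hi)
      exact ⟨y, fun _ => hy⟩
    · exact ⟨x, fun h => absurd h hi⟩
  choose next hnext using hnext
  exact ⟨fun n => Nat.rec (motive := fun _ => TState Q C) s next n, rfl,
    fun i hi => hnext i _ hi⟩

variable {ρ : FinTW α} {r : ℕ → TState Q C}

lemma FinRun.reflTransGen_stepT (hr : A.FinRun ρ r) (hρ : IsFinTW ρ) :
    ReflTransGen A.stepT (r 0, 0) (r (ρ.len + 1), ρ.dur) := by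
  suffices h : ∀ i ≤ ρ.len + 1, ReflTransGen A.stepT (r 0, 0) (r i, prevT ρ.time i) by
    simpa [prevT_succ, FinTW.dur] using h _ le_rfl
  intro i hi
  induction i with
  | zero => exact .refl
  | succ i ih =>
    have hi : i ≤ ρ.len := by omega
    refine (ih (by omega)).tail ⟨_, hρ.delay_pos hi, ⟨ρ.sym i, hr i hi⟩, ?_⟩
    rw [prevT_succ]
    ring

lemma FinRun.catInf_mem_lang (hr : A.FinRun ρ r) (hρ : IsFinTW ρ) {μ : InfTW α}
    (hμ : μ ∈ A.Lang (r (ρ.len + 1))) : ρ.catInf μ ∈ A.Lang (r 0) := by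
  obtain ⟨hμ, rμ, hrμ0, hrμ, q, hq, hinf⟩ := hμ
  let r' : ℕ → TState Q C := fun i => if i ≤ ρ.len then r i else rμ (i - ρ.len - 1)
  have hr'_le : ∀ i ≤ ρ.len + 1, r' i = r i := by
    intro i hi
    by_cases h : i ≤ ρ.len
    · exact if_pos h
    · simp [r', show i = ρ.len + 1 by omega, hrμ0]
  have hr'_add : ∀ j, r' (ρ.len + j + 1) = rμ j := fun j => by
    simp [r', show ρ.len + j + 1 - ρ.len - 1 = j by omega]
  refine ⟨FinTW.catInf_isInfTW hρ hμ, r', hr'_le 0 (by omega), fun i => ?_, q, hq, fun n => ?_⟩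
  · rcases le_or_gt i ρ.len with hi | hi
    · rw [hr'_le i (by omega), hr'_le (i + 1) (by omega), FinTW.catInf_fst_of_le _ _ hi,
        FinTW.catInf_snd_of_le _ _ hi, FinTW.prevT_catInf_snd_of_le _ _ hi]
      exact hr i hi
    · obtain ⟨j, rfl⟩ := Nat.exists_eq_add_of_lt hi
      rw [hr'_add, show ρ.len + j + 1 + 1 = ρ.len + (j + 1) + 1 by ring, hr'_add,
        FinTW.catInf_fst_add, FinTW.catInf_snd_add, FinTW.prevT_catInf_snd_add,
        add_sub_add_left_eq_sub]
      exact hrμ j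
  · obtain ⟨m, hm, hqm⟩ := hinf n
    exact ⟨ρ.len + m + 1, by omega, by rwa [hr'_add]⟩

lemma catInf_mem_langInit_of_mem_terminal {s : TState Q C} (hs : s ∈ A.Terminal ρ)
    (hρ : IsFinTW ρ) {μ : InfTW α} (hμ : μ ∈ A.Lang s) : ρ.catInf μ ∈ A.LangInit := by
  obtain ⟨r, hinit, hzero, hr, rfl⟩ := hs
  refine ⟨(r 0).1, hinit, ?_⟩
  rw [show ((r 0).1, fun _ => 0) = r 0 from Prod.ext rfl (funext fun c => (hzero c).symm)]
  exact hr.catInf_mem_lang hρ hμ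

lemma dState_le {s s' : TState Q C} {t : ℝ} (h : ReflTransGen A.stepT (s, 0) (s', t))
    (hs' : s' ∉ A.NonEmptySt) : A.dState s ≤ ENNReal.ofReal t :=
  sInf_le ⟨s', t, 0, h, le_rfl, by simpa using hs', by simp⟩

end TBA

theorem stmt5_general {α Q C : Type}
    (φ : Set (InfTW α))
    (A : TBA α Q C) (hcomp : A.Complete)
    (hL : A.LangInit = φ ∩ {μ | IsDivergent μ})
    (ρ : FinTW α) (hρ : IsFinTW ρ) :
    A.dSet (A.Terminal ρ) ≤ Dbar φ ρ := by
  refine iSup₂_le fun s hs => le_sInf ?_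
  rintro _ ⟨ρ', hρ', hφ', rfl⟩
  obtain ⟨r, rfl, hr⟩ := hcomp.exists_finRun hρ' s
  refine TBA.dState_le (hr.reflTransGen_stepT hρ') fun ⟨μ, hμ⟩ => ?_
  have hmem : (ρ.catFin ρ').catInf μ ∈ A.LangInit := by
    rw [FinTW.catFin_catInf]
    exact TBA.catInf_mem_langInit_of_mem_terminal hs hρ (hr.catInf_mem_lang hρ' hμ)
  rw [hL] at hmem
  exact hφ' μ (FinTW.isDivergent_of_catInf hμ.1 hmem.2) hmem.1

theorem stmt5 {α Q C : Type} [Finite α] [Nonempty α] [Finite Q] [Finite C]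
    (φ : Set (InfTW α)) (hφ : ∀ μ ∈ φ, IsInfTW μ)
    (A : TBA α Q C) (hfin : A.trans.Finite) (hcomp : A.Complete)
    (hL : A.LangInit = φ ∩ {μ | IsDivergent μ})
    (ρ : FinTW α) (hρ : IsFinTW ρ) :
    A.dSet (A.Terminal ρ) ≤ Dbar φ ρ :=
  stmt5_general φ A hcomp hL ρ hρ
end
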